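/- The principal series module π(ε,ν) is reducible (i.e. admits a submodule W with 0 ≠ W ≠ V_ε) if and only if ν is an integer satisfying (−1)^ν = −ε. Equivalently, π(ε,ν) is irreducible if and only if ν ∉ ℤ_{−ε}. -/

import Mathlib

namespace SL2Deform

/-- The index set `ℤ_ε = {j : ℤ | (-1)^j = ε}`, for a sign `ε ∈ {1, -1}`
(i.e. a unit of `ℤ`). -/
abbrev idx (ε : ℤˣ) : Type := {j : ℤ // (-1 : ℤˣ) ^ j = ε}

/-- `V ε`: the complex vector space of finitely supported functions on `ℤ_ε`,
with standard basis `{v_j}`. -/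
abbrev V (ε : ℤˣ) : Type := idx ε →₀ ℂ

/-- The standard basis vector `v_j` of `V ε`, for `j ∈ ℤ_ε`. -/
noncomputable def bv (ε : ℤˣ) (j : ℤ) (h : (-1 : ℤˣ) ^ j = ε) : V ε :=
  Finsupp.single ⟨j, h⟩ 1

lemma parity_two : (-1 : ℤˣ) ^ (2 : ℤ) = 1 := by decide
lemma parity_neg_two : (-1 : ℤˣ) ^ (-2 : ℤ) = 1 := by decide
lemma parity_zero : (-1 : ℤˣ) ^ (0 : ℤ) = 1 := by decide

lemma parity_shift {ε : ℤˣ} {j : ℤ} (h : (-1 : ℤˣ) ^ j = ε) {s : ℤ}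
    (hs : (-1 : ℤˣ) ^ s = 1) : (-1 : ℤˣ) ^ (j + s) = ε := by
  rw [zpow_add, h, hs, mul_one]

/-- If `m ∈ ℤ_{-ε}` then `m + 1 ∈ ℤ_ε`. -/
lemma parity_succ {ε : ℤˣ} {m : ℤ} (h : (-1 : ℤˣ) ^ m = -ε) :
    (-1 : ℤˣ) ^ (m + 1) = ε := by
  rw [zpow_add, h, zpow_one]
  simp

/-- If `m ∈ ℤ_{-ε}` then `m - 1 ∈ ℤ_ε`. -/
lemma parity_pred {ε : ℤˣ} {m : ℤ} (h : (-1 : ℤˣ) ^ m = -ε) :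
    (-1 : ℤˣ) ^ (m - 1) = ε := by
  rw [sub_eq_add_neg, zpow_add, h, zpow_neg, zpow_one]
  simp

/-- The linear operator on `V ε` sending `v_j` to `c j • v_{j+s}`,
for an even shift `s`. -/
noncomputable def shiftOp (ε : ℤˣ) (s : ℤ) (hs : (-1 : ℤˣ) ^ s = 1) (c : ℤ → ℂ) :
    V ε →ₗ[ℂ] V ε :=
  Finsupp.lsum ℂ fun j =>
    LinearMap.toSpanSingleton ℂ (V ε)
      (Finsupp.single ⟨j.1 + s, parity_shift j.2 hs⟩ (c j.1))

/-- `H v_j = j • v_j`. -/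
noncomputable def Hop (ε : ℤˣ) : V ε →ₗ[ℂ] V ε :=
  shiftOp ε 0 parity_zero fun j => (j : ℂ)

/-- Principal series: `E v_j = ½(ν + j + 1) • v_{j+2}`. -/
noncomputable def Eop (ε : ℤˣ) (ν : ℂ) : V ε →ₗ[ℂ] V ε :=
  shiftOp ε 2 parity_two fun j => (1 / 2 : ℂ) * (ν + j + 1)

/-- Principal series: `F v_j = ½(ν - j + 1) • v_{j-2}`. -/
noncomputable def Fop (ε : ℤˣ) (ν : ℂ) : V ε →ₗ[ℂ] V ε :=
  shiftOp ε (-2) parity_neg_two fun j => (1 / 2 : ℂ) * (ν - j + 1)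

/-- `f_m(ν) = ½ |ν²-m²|^{1/2} (ν+m)/|ν+m|` for `ν ≠ -m`, and `f_m(-m) = 0`. -/
noncomputable def fm (m : ℤ) (ν : ℂ) : ℂ :=
  if ν = -(m : ℂ) then 0
  else (1 / 2 : ℂ) * (Real.sqrt (‖ν ^ 2 - (m : ℂ) ^ 2‖) : ℝ) * (ν + m) /
    (‖ν + (m : ℂ)‖ : ℝ)

/-- Deformed module: `E v_{m-1} = f_m(ν) • v_{m+1}`, i.e. `E v_j = f_{j+1}(ν) • v_{j+2}`. -/
noncomputable def PEop (ε : ℤˣ) (ν : ℂ) : V ε →ₗ[ℂ] V ε :=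
  shiftOp ε 2 parity_two fun j => fm (j + 1) ν

/-- Deformed module: `F v_{m+1} = f_{-m}(ν) • v_{m-1}`, i.e. `F v_j = f_{-(j-1)}(ν) • v_{j-2}`. -/
noncomputable def PFop (ε : ℤˣ) (ν : ℂ) : V ε →ₗ[ℂ] V ε :=
  shiftOp ε (-2) parity_neg_two fun j => fm (1 - j) ν

/-- The module `π'(ε,ν)`: `E v_{m-1} = ½(ν - |m|) • v_{m+1}`,
i.e. `E v_j = ½(ν - |j+1|) • v_{j+2}`. -/
noncomputable def E'op (ε : ℤˣ) (ν : ℂ) : V ε →ₗ[ℂ] V ε :=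
  shiftOp ε 2 parity_two fun j => (1 / 2 : ℂ) * (ν - ((|j + 1| : ℤ) : ℂ))

/-- The module `π'(ε,ν)`: `F v_{m+1} = ½(ν + |m|) • v_{m-1}`,
i.e. `F v_j = ½(ν + |j-1|) • v_{j-2}`. -/
noncomputable def F'op (ε : ℤˣ) (ν : ℂ) : V ε →ₗ[ℂ] V ε :=
  shiftOp ε (-2) parity_neg_two fun j => (1 / 2 : ℂ) * (ν + ((|j - 1| : ℤ) : ℂ))

/-- `ν ∈ ℤ_{-ε}`: `ν` is an integer with `(-1)^ν = -ε`. -/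
def inZminus (ε : ℤˣ) (ν : ℂ) : Prop :=
  ∃ n : ℤ, ν = (n : ℂ) ∧ (-1 : ℤˣ) ^ n = -ε

section ModuleNotions

variable {M : Type*} [AddCommGroup M] [Module ℂ M]
variable {N : Type*} [AddCommGroup N] [Module ℂ N]

/-- `W` is a submodule for the module with operators `A, B, C`: it is invariant
under all three operators. -/
def Invariant (A B C : M →ₗ[ℂ] M) (W : Submodule ℂ M) : Prop :=
  (∀ x ∈ W, A x ∈ W) ∧ (∀ x ∈ W, B x ∈ W) ∧ (∀ x ∈ W, C x ∈ W)

/-- The module with operators `A, B, C` is irreducible: its only submodules are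
`0` and the whole space. -/
def IsIrreducibleRep (A B C : M →ₗ[ℂ] M) : Prop :=
  ∀ W : Submodule ℂ M, Invariant A B C W → W = ⊥ ∨ W = ⊤

/-- `W` is an irreducible submodule: invariant, nonzero, and with no nonzero
proper invariant subspace. -/
def IsIrreducibleSubmodule (A B C : M →ₗ[ℂ] M) (W : Submodule ℂ M) : Prop :=
  Invariant A B C W ∧ W ≠ ⊥ ∧
    ∀ U : Submodule ℂ M, Invariant A B C U → U ≤ W → U = ⊥ ∨ U = W

/-- The module with operators `A, B, C` is completely reducible: every invariant
subspace has an invariant complement. -/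
def CompletelyReducible (A B C : M →ₗ[ℂ] M) : Prop :=
  ∀ W : Submodule ℂ M, Invariant A B C W →
    ∃ U : Submodule ℂ M, Invariant A B C U ∧ IsCompl W U

/-- The two modules (given by operator triples) are isomorphic. -/
def Intertwined (A B C : M →ₗ[ℂ] M) (A' B' C' : N →ₗ[ℂ] N) : Prop :=
  ∃ e : M ≃ₗ[ℂ] N, (∀ x, e (A x) = A' (e x)) ∧ (∀ x, e (B x) = B' (e x)) ∧
    (∀ x, e (C x) = C' (e x))

/-- An invariant Hermitian form for the module with operators `A, B, C`
(`A` playing the role of `H`, `B` of `E`, `C` of `F`): a sesquilinear form,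
conjugate-symmetric, with `⟨Hv,w⟩ = ⟨v,Hw⟩`, `⟨Ev,w⟩ + ⟨v,Fw⟩ = 0`,
`⟨Fv,w⟩ + ⟨v,Ew⟩ = 0`. -/
structure IsInvHermForm (A B C : M →ₗ[ℂ] M) (Φ : M → M → ℂ) : Prop where
  add_left : ∀ u v w, Φ (u + v) w = Φ u w + Φ v w
  smul_left : ∀ (a : ℂ) (v w : M), Φ (a • v) w = a * Φ v w
  conj_symm : ∀ v w, Φ w v = (starRingEnd ℂ) (Φ v w)
  inv_A : ∀ v w, Φ (A v) w = Φ v (A w)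
  inv_BC : ∀ v w, Φ (B v) w + Φ v (C w) = 0
  inv_CB : ∀ v w, Φ (C v) w + Φ v (B w) = 0

end ModuleNotions

/-- `span{v_j : j ≥ n}`. -/
noncomputable def spanGE (ε : ℤˣ) (n : ℤ) : Submodule ℂ (V ε) :=
  Submodule.span ℂ {x : V ε | ∃ j : idx ε, n ≤ j.1 ∧ x = Finsupp.single j 1}

/-- `span{v_j : j ≤ n}`. -/
noncomputable def spanLE (ε : ℤˣ) (n : ℤ) : Submodule ℂ (V ε) :=
  Submodule.span ℂ {x : V ε | ∃ j : idx ε, j.1 ≤ n ∧ x = Finsupp.single j 1}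

/-- `span{v_j : |j| ≤ n}`. -/
noncomputable def spanAbsLE (ε : ℤˣ) (n : ℤ) : Submodule ℂ (V ε) :=
  Submodule.span ℂ {x : V ε | ∃ j : idx ε, |j.1| ≤ n ∧ x = Finsupp.single j 1}

/-- The diagonal operator `S v_j = c j • v_j`. -/
noncomputable def diagMap (ε : ℤˣ) (c : idx ε → ℂ) : V ε →ₗ[ℂ] V ε :=
  Finsupp.lsum ℂ fun j => LinearMap.toSpanSingleton ℂ (V ε) (Finsupp.single j (c j))

/-! `H` acts diagonally with the distinct eigenvalues `j`, so every nonzero submodule contains a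
basis vector `v_j`. If `ν ∉ ℤ_{-ε}`, none of the coefficients `½(ν ± j + 1)` vanishes, so `E` and
`F` carry `v_j` to every `v_{j ± 2}` and the submodule is everything. If `ν = n ∈ ℤ_{-ε}`, then
`F v_{n+1} = 0`, so `span {v_j : j ≥ n + 1}` is a proper nonzero submodule. -/

end SL2Deform

section Finsupp

variable {K ι : Type*} [Field K]

open Finsupp in
theorem exists_single_one_mem_of_diagonal {T : (ι →₀ K) →ₗ[K] ι →₀ K} {c : ι → K}
    (hT : ∀ x i, T x i = c i * x i) (hc : Function.Injective c)
    {W : Submodule K (ι →₀ K)} (hW : ∀ x ∈ W, T x ∈ W) (hW0 : W ≠ ⊥) :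
    ∃ i, single i 1 ∈ W := by
  classical
  obtain ⟨x, hxW, hx0⟩ := Submodule.exists_mem_ne_zero_of_ne_bot hW0
  induction hn : x.support.card using Nat.strong_induction_on generalizing x with
  | _ n ih =>
  rcases Nat.lt_or_ge 1 n with hn1 | hn1
  · obtain ⟨i, hi, j, hj, hij⟩ := Finset.one_lt_card.mp (hn ▸ hn1)
    -- `T - c j` kills the `j`-th coordinate of `x` but not the `i`-th one
    set y := T x - c j • x
    have hy : ∀ k, y k = (c k - c j) * x k := fun k => by
      simp only [y, coe_sub, coe_smul, Pi.sub_apply, Pi.smul_apply, hT, smul_eq_mul]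
      ring
    have hsupp : y.support ⊆ x.support.erase j := fun k hk => by
      rw [mem_support_iff, hy] at hk
      exact Finset.mem_erase.mpr ⟨fun hkj => hk (by rw [hkj, sub_self, zero_mul]),
        mem_support_iff.mpr (right_ne_zero_of_mul hk)⟩
    refine ih _ ?_ y (W.sub_mem (hW x hxW) (W.smul_mem _ hxW)) ?_ rfl
    · exact hn ▸ (Finset.card_le_card hsupp).trans_lt (Finset.card_erase_lt_of_mem hj)
    · intro hy0
      have := hy i
      rw [hy0, Finsupp.zero_apply, eq_comm] at this
      exact mul_ne_zero (sub_ne_zero.mpr (hc.ne hij)) (mem_support_iff.mp hi) this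
  · have hcard : x.support.card = 1 := by
      have := Finset.card_pos.mpr (support_nonempty_iff.mpr hx0)
      omega
    obtain ⟨i, b, hb, rfl⟩ := card_support_eq_one'.mp hcard
    refine ⟨i, ?_⟩
    simpa [smul_single, inv_mul_cancel₀ hb] using W.smul_mem b⁻¹ hxW

theorem Finsupp.supported_le_comap_of_single {s : Set ι} (A : (ι →₀ K) →ₗ[K] ι →₀ K)
    (h : ∀ i ∈ s, A (Finsupp.single i 1) ∈ Finsupp.supported K K s) :
    Finsupp.supported K K s ≤ (Finsupp.supported K K s).comap A :=
  (Finsupp.supported_eq_span_single K s).trans_le (Submodule.span_le.mpr (by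
    rintro _ ⟨i, hi, rfl⟩
    exact h i hi))

theorem Submodule.eq_top_of_forall_single_one_mem {W : Submodule K (ι →₀ K)}
    (h : ∀ i, Finsupp.single i 1 ∈ W) : W = ⊤ := by
  rw [eq_top_iff, ← Finsupp.basisSingleOne.span_eq, Submodule.span_le, Finsupp.coe_basisSingleOne]
  exact Set.range_subset_iff.mpr h

end Finsupp

namespace SL2Deform

section Parity

variable {ε : ℤˣ}

theorem idx.even_sub (j k : idx ε) : Even (j.1 - k.1) :=
  (Int.negOnePow_eq_iff _ _).mp (j.2.trans k.2.symm)

theorem idx.neg_one_zpow_add_one (k : idx ε) : (-1 : ℤˣ) ^ (k.1 + 1) = -ε :=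
  (Int.negOnePow_succ k.1).trans (congrArg Neg.neg k.2)

theorem idx.forall_of_iff_add_two {P : idx ε → Prop}
    (hP : ∀ k k' : idx ε, k'.1 = k.1 + 2 → (P k ↔ P k')) (j : idx ε) (hj : P j) (k : idx ε) :
    P k := by
  obtain ⟨r, hr⟩ := k.even_sub j
  obtain ⟨e, he⟩ : ∃ e, k.1 = j.1 + 2 * e := ⟨r, by omega⟩
  clear hr
  induction e using Int.induction_on generalizing k with
  | zero => exact (Subtype.ext (by omega) : j = k) ▸ hj
  | succ e ih =>
    exact (hP ⟨k.1 + -2, parity_shift k.2 parity_neg_two⟩ k (by ring)).mp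
      (ih _ (by simp only; omega))
  | pred e ih =>
    exact (hP k ⟨k.1 + 2, parity_shift k.2 parity_two⟩ rfl).mpr
      (ih _ (by simp only; omega))

end Parity

section ShiftOp

variable {ε : ℤˣ} {s : ℤ} {hs : (-1 : ℤˣ) ^ s = 1} {c : ℤ → ℂ}

theorem shiftOp_single (k : idx ε) (a : ℂ) :
    shiftOp ε s hs c (Finsupp.single k a) =
      Finsupp.single ⟨k.1 + s, parity_shift k.2 hs⟩ (a * c k.1) := by
  simp [shiftOp, LinearMap.toSpanSingleton_apply, Finsupp.smul_single]

theorem single_one_mem_of_shiftOp {W : Submodule ℂ (V ε)}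
    (hW : ∀ x ∈ W, shiftOp ε s hs c x ∈ W) {k k' : idx ε} (hkk' : k'.1 = k.1 + s)
    (hck : c k.1 ≠ 0) (hk : Finsupp.single k 1 ∈ W) : Finsupp.single k' 1 ∈ W := by
  obtain rfl : k' = ⟨k.1 + s, parity_shift k.2 hs⟩ := Subtype.ext hkk'
  have := W.smul_mem (c k.1)⁻¹ (hW _ hk)
  rwa [shiftOp_single, Finsupp.smul_single, one_mul, smul_eq_mul, inv_mul_cancel₀ hck] at this

theorem shiftOp_mem_supported_ge {m : ℤ} (hc : ∀ j : idx ε, m ≤ j.1 → j.1 + s < m → c j.1 = 0)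
    {x : V ε} (hx : x ∈ Finsupp.supported ℂ ℂ {j : idx ε | m ≤ j.1}) :
    shiftOp ε s hs c x ∈ Finsupp.supported ℂ ℂ {j : idx ε | m ≤ j.1} := by
  refine Finsupp.supported_le_comap_of_single _ (fun (j : idx ε) (hj : m ≤ j.1) => ?_) hx
  rw [shiftOp_single]
  by_cases hjs : m ≤ j.1 + s
  · exact Finsupp.single_mem_supported ℂ _ hjs
  · rw [hc j hj (by omega), mul_zero, Finsupp.single_zero]
    exact zero_mem _

end ShiftOp

theorem Hop_apply (ε : ℤˣ) (x : V ε) (k : idx ε) : Hop ε x k = k.1 * x k := by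
  induction x using Finsupp.induction_linear with
  | zero => simp
  | add x y hx hy => simp [hx, hy, mul_add]
  | single i a =>
    rw [Hop, shiftOp_single]
    obtain rfl | hik := eq_or_ne i k
    · simp [mul_comm]
    · simp [Finsupp.single_eq_of_ne' hik]

theorem spanGE_eq_supported (ε : ℤˣ) (m : ℤ) :
    spanGE ε m = Finsupp.supported ℂ ℂ {j : idx ε | m ≤ j.1} := by
  rw [Finsupp.supported_eq_span_single, spanGE]
  congr 1
  ext x
  simp [eq_comm]

theorem IsIrreducibleRep.iff_not_exists {M : Type*} [AddCommGroup M] [Module ℂ M]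
    {A B C : M →ₗ[ℂ] M} :
    IsIrreducibleRep A B C ↔ ¬ ∃ W, Invariant A B C W ∧ W ≠ ⊥ ∧ W ≠ ⊤ := by
  simp only [IsIrreducibleRep, not_exists, not_and, ne_eq, not_not, ← or_iff_not_imp_left]

section PrincipalSeries

variable {ε : ℤˣ} {ν : ℂ}

theorem Eop_coeff_ne_zero (h : ¬ inZminus ε ν) (k : idx ε) : (1 / 2 : ℂ) * (ν + k.1 + 1) ≠ 0 := by
  refine mul_ne_zero (by norm_num) fun h0 => h ⟨-(k.1 + 1), by push_cast; linear_combination h0, ?_⟩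
  rw [← Int.negOnePow_def, Int.negOnePow_neg]
  exact k.neg_one_zpow_add_one

theorem Fop_coeff_ne_zero (h : ¬ inZminus ε ν) (k : idx ε) : (1 / 2 : ℂ) * (ν - k.1 + 1) ≠ 0 := by
  refine mul_ne_zero (by norm_num) fun h0 => h ⟨k.1 - 1, by push_cast; linear_combination h0, ?_⟩
  rw [← Int.negOnePow_def, Int.negOnePow_sub, Int.negOnePow_one, Int.negOnePow_def, k.2,
    mul_neg_one]

theorem isIrreducibleRep_of_not_inZminus (h : ¬ inZminus ε ν) :
    IsIrreducibleRep (Hop ε) (Eop ε ν) (Fop ε ν) := by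
  rintro W ⟨hH, hE, hF⟩
  refine or_iff_not_imp_left.mpr fun hW0 => ?_
  obtain ⟨j, hj⟩ := exists_single_one_mem_of_diagonal (Hop_apply ε)
    (fun a b hab => Subtype.ext (by exact_mod_cast hab)) hH hW0
  have hstep : ∀ k k' : idx ε, k'.1 = k.1 + 2 →
      (Finsupp.single k 1 ∈ W ↔ Finsupp.single k' 1 ∈ W) := fun k k' hkk' =>
    ⟨single_one_mem_of_shiftOp hE hkk' (Eop_coeff_ne_zero h k),
      single_one_mem_of_shiftOp hF (by omega) (Fop_coeff_ne_zero h k')⟩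
  exact Submodule.eq_top_of_forall_single_one_mem (idx.forall_of_iff_add_two hstep j hj)

theorem exists_invariant_ne_bot_ne_top_of_inZminus (h : inZminus ε ν) :
    ∃ W : Submodule ℂ (V ε), Invariant (Hop ε) (Eop ε ν) (Fop ε ν) W ∧ W ≠ ⊥ ∧ W ≠ ⊤ := by
  obtain ⟨n, rfl, hn⟩ := h
  let v : idx ε := ⟨n + 1, parity_succ hn⟩
  refine ⟨spanGE ε (n + 1), ?_, ?_, ?_⟩ <;> rw [spanGE_eq_supported]
  · refine ⟨fun _ => shiftOp_mem_supported_ge ?_, fun _ => shiftOp_mem_supported_ge ?_,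
      fun _ => shiftOp_mem_supported_ge ?_⟩ <;> intro j hj hjs
    · omega
    · omega
    -- `F v_{n+1} = 0`
    · obtain ⟨r, hr⟩ := j.even_sub v
      have hjv : j.1 = n + 1 := by simp only [v] at hr; omega
      rw [hjv]
      push_cast
      ring
  · exact (Submodule.ne_bot_iff _).mpr
      ⟨Finsupp.single v 1, Finsupp.single_mem_supported ℂ _ (show n + 1 ≤ v.1 from le_rfl), by simp⟩
  · intro htop
    let w : idx ε := ⟨n - 1, parity_pred hn⟩
    have := (Finsupp.mem_supported' ℂ (Finsupp.single w (1 : ℂ))).mp (htop ▸ Submodule.mem_top) w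
      (show ¬ n + 1 ≤ n - 1 by omega)
    simp at this

end PrincipalSeries

/-- `π(ε,ν)` is reducible (has a submodule `W` with `0 ≠ W ≠ V_ε`) iff
`ν` is an integer with `(-1)^ν = -ε`; equivalently, `π(ε,ν)` is irreducible iff
`ν ∉ ℤ_{-ε}`. -/
theorem principal_series_reducible_iff (ε : ℤˣ) (ν : ℂ) :
    ((∃ W : Submodule ℂ (V ε),
        Invariant (Hop ε) (Eop ε ν) (Fop ε ν) W ∧ W ≠ ⊥ ∧ W ≠ ⊤) ↔ inZminus ε ν) ∧
    (IsIrreducibleRep (Hop ε) (Eop ε ν) (Fop ε ν) ↔ ¬ inZminus ε ν) := by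
  have hred : (∃ W : Submodule ℂ (V ε),
      Invariant (Hop ε) (Eop ε ν) (Fop ε ν) W ∧ W ≠ ⊥ ∧ W ≠ ⊤) ↔ inZminus ε ν :=
    ⟨fun ⟨W, hW, hbot, htop⟩ => by_contra fun h =>
      (isIrreducibleRep_of_not_inZminus h W hW).elim hbot htop,
      exists_invariant_ne_bot_ne_top_of_inZminus⟩
  exact ⟨hred, IsIrreducibleRep.iff_not_exists.trans (not_congr hred)⟩

end SL2Deform
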